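/- arXiv:0809.3035 — 4 statements merged into one kernel-verified Lean document; each statement's English description precedes it below -/
import Mathlib

section
/- For every pair of distinct users i ≠ j and every independent set S of the interference graph G_{K,T}, the number of vertices of S in row j plus the number of vertices of S in row i is at most T + |l'_{ij}|, where row k denotes the set of vertices {(k,t) : 1 ≤ t ≤ T}. -/
/-- The time-indexed interference graph `G_{K,T}` of the `K`-user LOS interference
channel with normalized cross-delays `l i j` (representing `l'_{ij}` for `i ≠ j`).
Time slots `1 ≤ t ≤ T` are represented by `Fin T`; for `i ≠ j`, the vertex `(j, t)`
is adjacent to `(i, t + l'_{ij})` whenever the latter time slot is in range. -/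
def interferenceGraph (K T : ℕ) (l : Fin K → Fin K → ℤ) :
    SimpleGraph (Fin K × Fin T) where
  Adj a b := a.1 ≠ b.1 ∧
    (((b.2 : ℕ) : ℤ) = ((a.2 : ℕ) : ℤ) + l b.1 a.1 ∨
     ((a.2 : ℕ) : ℤ) = ((b.2 : ℕ) : ℤ) + l a.1 b.1)
  symm := by
    constructor
    rintro a b ⟨h1, h2⟩
    exact ⟨h1.symm, h2.symm⟩
  loopless := by
    constructor
    rintro a ⟨h, -⟩
    exact h rfl

/-! Shift the time slots of row `j` by `l'_{ij}`: a shifted slot of row `j` that is also a slot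
of row `i` would be an edge, so the two sets of slots are disjoint, and together they lie in an
interval of `T + |l'_{ij}|` integers. -/

open Finset Pointwise

theorem card_add_card_le_of_disjoint_vadd {n : ℕ} {L : ℤ} {A B : Finset ℤ}
    (hA : A ⊆ Ico 0 n) (hB : B ⊆ Ico 0 n) (hAB : Disjoint (L +ᵥ A) B) :
    #A + #B ≤ n + L.natAbs := by
  have hsub : (L +ᵥ A) ∪ B ⊆ Ico (min 0 L) (n + max 0 L) := by
    intro x hx
    rw [mem_Ico]
    rcases mem_union.mp hx with hx | hx
    · obtain ⟨y, hy, rfl⟩ := mem_vadd_finset.mp hx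
      have := mem_Ico.mp (hA hy)
      rw [vadd_eq_add]
      omega
    · have := mem_Ico.mp (hB hx)
      omega
  calc #A + #B = #((L +ᵥ A) ∪ B) := by rw [card_union_of_disjoint hAB, card_vadd_finset]
    _ ≤ #(Ico (min 0 L) (n + max 0 L)) := card_le_card hsub
    _ = n + L.natAbs := by rw [Int.card_Ico]; omega

section rowTimes

variable {K T : ℕ}

def rowTimes (S : Finset (Fin K × Fin T)) (k : Fin K) : Finset ℤ :=
  (S.filter (fun v => v.1 = k)).image fun v => ((v.2 : ℕ) : ℤ)

theorem card_rowTimes (S : Finset (Fin K × Fin T)) (k : Fin K) :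
    #(rowTimes S k) = #(S.filter (fun v => v.1 = k)) := by
  refine card_image_of_injOn fun u hu v hv huv => ?_
  simp only [mem_coe, mem_filter] at hu hv
  exact Prod.ext (hu.2.trans hv.2.symm) (Fin.ext (by exact_mod_cast huv))

theorem rowTimes_subset_Ico (S : Finset (Fin K × Fin T)) (k : Fin K) :
    rowTimes S k ⊆ Ico 0 (T : ℤ) := by
  intro x hx
  obtain ⟨v, -, rfl⟩ := mem_image.mp hx
  simp [v.2.isLt]

theorem disjoint_vadd_rowTimes {l : Fin K → Fin K → ℤ} {i j : Fin K} (hij : i ≠ j)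
    {S : Finset (Fin K × Fin T)} (hS : ∀ u ∈ S, ∀ v ∈ S, ¬ (interferenceGraph K T l).Adj u v) :
    Disjoint (l i j +ᵥ rowTimes S j) (rowTimes S i) := by
  rw [disjoint_left]
  intro x hxj hxi
  obtain ⟨_, hy, rfl⟩ := mem_vadd_finset.mp hxj
  obtain ⟨u, hu, rfl⟩ := mem_image.mp hy
  obtain ⟨v, hv, hvu⟩ := mem_image.mp hxi
  rw [mem_filter] at hu hv
  refine hS u hu.1 v hv.1 ⟨by rw [hu.2, hv.2]; exact hij.symm, Or.inl ?_⟩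
  rw [hvu, hu.2, hv.2, vadd_eq_add, add_comm]

end rowTimes

theorem row_pair_bound_general (K T : ℕ) (l : Fin K → Fin K → ℤ) (i j : Fin K) (hij : i ≠ j)
    (S : Finset (Fin K × Fin T))
    (hS : ∀ u ∈ S, ∀ v ∈ S, ¬ (interferenceGraph K T l).Adj u v) :
    (S.filter (fun v => v.1 = j)).card + (S.filter (fun v => v.1 = i)).card
      ≤ T + (l i j).natAbs := by
  rw [← card_rowTimes, ← card_rowTimes]
  exact card_add_card_le_of_disjoint_vadd (rowTimes_subset_Ico S j) (rowTimes_subset_Ico S i)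
    (disjoint_vadd_rowTimes hij hS)

/-- For every pair of distinct users `i ≠ j` and every independent set `S` of the
interference graph `G_{K,T}`, the number of vertices of `S` in row `j` plus the number
of vertices of `S` in row `i` is at most `T + |l'_{ij}|`. -/
theorem row_pair_bound (K T : ℕ) (hK : 2 ≤ K) (hT : 1 ≤ T)
    (l : Fin K → Fin K → ℤ) (i j : Fin K) (hij : i ≠ j)
    (S : Finset (Fin K × Fin T))
    (hS : ∀ u ∈ S, ∀ v ∈ S, ¬ (interferenceGraph K T l).Adj u v) :
    (S.filter (fun v => v.1 = j)).card + (S.filter (fun v => v.1 = i)).card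
      ≤ T + (l i j).natAbs :=
  row_pair_bound_general K T l i j hij S hS
end

section
/- Let N ≥ 2 and let L be a prime with L ≥ N. Then the number of tuples g = (g₁,…,g_N) ∈ (ZMod L)^N for which the map α ↦ Σ_{p=1}^N α_p·g_p from {0,…,N−1}^N to ZMod L is not injective is at most (2N)^N · L^{N−1}. Equivalently, for g₁,…,g_N independent and uniform on ZMod L, the probability that the generalized arithmetic progression T = {Σ_p α_p g_p : α ∈ {0,…,N−1}^N} has fewer than N^N elements is at most (2N)^N / L. -/
/-- Auxiliary: coefficient vector attached to an encoded difference. -/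
def coefAux (L N : ℕ) (d : Fin N → Fin (2 * N)) (p : Fin N) : ZMod L :=
  ((d p : ℕ) : ZMod L) - ((N - 1 : ℕ) : ZMod L)

/-- For `N ≥ 2` and a prime `L ≥ N`, the number of tuples `g ∈ (ZMod L)^N` for which
the map `α ↦ Σ_p α_p·g_p` from `{0,…,N−1}^N` to `ZMod L` is not injective (i.e. the
generalized arithmetic progression `T = {Σ_p α_p g_p}` has fewer than `N^N` elements)
is at most `(2N)^N · L^{N−1}`; equivalently, for uniform independent `g₁,…,g_N` the
probability of non-injectivity is at most `(2N)^N / L`. -/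
theorem count_noninjective_gap_le (L N : ℕ) (hN : 2 ≤ N) (hL : Nat.Prime L)
    (hLN : N ≤ L) :
    Nat.card {g : Fin N → ZMod L //
        ¬ Function.Injective (fun α : Fin N → Fin N => ∑ p, (α p : ℕ) • g p)}
      ≤ (2 * N) ^ N * L ^ (N - 1) := by
  classical
  haveI : Fact (Nat.Prime L) := ⟨hL⟩
  haveI : NeZero L := ⟨hL.pos.ne'⟩
  -- kernel cardinality lemma
  have hker : ∀ c : Fin N → ZMod L, (∃ i, c i ≠ 0) →
      (Finset.univ.filter (fun g : Fin N → ZMod L => ∑ p, c p * g p = 0)).card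
        ≤ L ^ (N - 1) := by
    rintro c ⟨i, hi⟩
    set φ : (Fin N → ZMod L) →+ ZMod L :=
      { toFun := fun g => ∑ p, c p * g p
        map_zero' := by simp
        map_add' := by intro a b; simp [mul_add, Finset.sum_add_distrib] } with hφ
    have hsurj : Function.Surjective φ := by
      intro y
      refine ⟨Function.update 0 i ((c i)⁻¹ * y), ?_⟩
      show ∑ p, c p * Function.update (0 : Fin N → ZMod L) i ((c i)⁻¹ * y) p = y
      rw [Finset.sum_eq_single i]
      · rw [Function.update_self, ← mul_assoc, mul_inv_cancel₀ hi, one_mul]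
      · intro b _ hb; rw [Function.update_of_ne hb]; simp
      · simp
    have hcard : Nat.card (Fin N → ZMod L)
        = Nat.card ((Fin N → ZMod L) ⧸ φ.ker) * Nat.card φ.ker :=
      AddSubgroup.card_eq_card_quotient_mul_card_addSubgroup φ.ker
    have hq : Nat.card ((Fin N → ZMod L) ⧸ φ.ker) = L := by
      rw [Nat.card_congr (QuotientAddGroup.quotientKerEquivOfSurjective φ hsurj).toEquiv]
      simp [Nat.card_eq_fintype_card, ZMod.card]
    have hdom : Nat.card (Fin N → ZMod L) = L ^ N := by
      simp [Nat.card_eq_fintype_card, ZMod.card]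
    have hLpow : L ^ N = L * L ^ (N - 1) := by
      conv_lhs => rw [← Nat.succ_pred_eq_of_pos (by omega : 0 < N)]
      rw [pow_succ']
      rfl
    have hker' : Nat.card φ.ker = L ^ (N - 1) := by
      have h1 : L * L ^ (N - 1) = L * Nat.card φ.ker := by
        rw [← hLpow, ← hdom, hcard, hq]
      exact (Nat.eq_of_mul_eq_mul_left hL.pos h1).symm
    have heq : (Finset.univ.filter (fun g : Fin N → ZMod L => ∑ p, c p * g p = 0)).card
        = Nat.card φ.ker := by
      rw [Nat.card_eq_fintype_card, ← Fintype.card_subtype]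
      exact (Fintype.card_congr (Equiv.subtypeEquivRight (fun g => by
        simp [AddMonoidHom.mem_ker, hφ]))).symm
    rw [heq, hker']
  -- coefficients from a pair difference, encoded in Fin (2*N)
  have hsub : Nat.card {g : Fin N → ZMod L //
        ¬ Function.Injective (fun α : Fin N → Fin N => ∑ p, (α p : ℕ) • g p)}
      = (Finset.univ.filter (fun g : Fin N → ZMod L =>
          ¬ Function.Injective (fun α : Fin N → Fin N => ∑ p, (α p : ℕ) • g p))).card := by
    rw [Nat.card_eq_fintype_card, Fintype.card_subtype]
  rw [hsub]; clear hsub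
  have hbU : (Finset.univ.filter (fun g : Fin N → ZMod L =>
          ¬ Function.Injective (fun α : Fin N → Fin N => ∑ p, (α p : ℕ) • g p)))
      ⊆ Finset.univ.biUnion (fun d : Fin N → Fin (2 * N) =>
          Finset.univ.filter (fun g : Fin N → ZMod L =>
            (∃ i, coefAux L N d i ≠ 0) ∧ ∑ p, coefAux L N d p * g p = 0)) := by
    intro g hg
    rw [Finset.mem_filter] at hg
    obtain ⟨-, hg⟩ := hg
    rw [Function.not_injective_iff] at hg
    obtain ⟨α, β, hsum, hne⟩ := hg
    have hd : ∀ p : Fin N, (α p : ℕ) + (N - 1) - (β p : ℕ) < 2 * N := by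
      intro p
      have h1 := (α p).isLt
      have h2 := (β p).isLt
      omega
    obtain ⟨d, hdd⟩ : ∃ d : Fin N → Fin (2 * N),
        ∀ p, (d p : ℕ) = (α p : ℕ) + (N - 1) - (β p : ℕ) :=
      ⟨fun p => ⟨(α p : ℕ) + (N - 1) - (β p : ℕ), hd p⟩, fun p => rfl⟩
    have hcoefval : ∀ p, coefAux L N d p = ((α p : ℕ) : ZMod L) - ((β p : ℕ) : ZMod L) := by
      intro p
      have h2 : (β p : ℕ) ≤ (α p : ℕ) + (N - 1) := by
        have := (β p).isLt; omega
      simp only [coefAux, hdd p]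
      push_cast [Nat.cast_sub h2]
      ring
    refine Finset.mem_biUnion.2 ⟨d, Finset.mem_univ _, Finset.mem_filter.2 ⟨Finset.mem_univ _, ?_, ?_⟩⟩
    · -- nonzero coefficient
      have : ∃ p, α p ≠ β p := by
        by_contra h
        push_neg at h
        exact hne (funext h)
      obtain ⟨p, hp⟩ := this
      refine ⟨p, ?_⟩
      rw [hcoefval p]
      intro h0
      have hcast : ((α p : ℕ) : ZMod L) = ((β p : ℕ) : ZMod L) := by
        have := sub_eq_zero.mp h0
        exact this
      have hv1 : ((α p : ℕ) : ZMod L).val = (α p : ℕ) :=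
        ZMod.val_cast_of_lt (lt_of_lt_of_le (α p).isLt hLN)
      have hv2 : ((β p : ℕ) : ZMod L).val = (β p : ℕ) :=
        ZMod.val_cast_of_lt (lt_of_lt_of_le (β p).isLt hLN)
      apply hp
      apply Fin.ext
      rw [← hv1, ← hv2, hcast]
    · -- sum is zero
      have : ∑ p, coefAux L N d p * g p
          = (∑ p, (α p : ℕ) • g p) - (∑ p, (β p : ℕ) • g p) := by
        rw [← Finset.sum_sub_distrib]
        refine Finset.sum_congr rfl (fun p _ => ?_)
        rw [hcoefval p, sub_mul, nsmul_eq_mul, nsmul_eq_mul]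
      rw [this, hsum, sub_self]
  calc (Finset.univ.filter (fun g : Fin N → ZMod L =>
          ¬ Function.Injective (fun α : Fin N → Fin N => ∑ p, (α p : ℕ) • g p))).card
      ≤ (Finset.univ.biUnion (fun d : Fin N → Fin (2 * N) =>
          Finset.univ.filter (fun g : Fin N → ZMod L =>
            (∃ i, coefAux L N d i ≠ 0) ∧ ∑ p, coefAux L N d p * g p = 0))).card :=
        Finset.card_le_card hbU
    _ ≤ ∑ d : Fin N → Fin (2 * N), (Finset.univ.filter (fun g : Fin N → ZMod L =>
            (∃ i, coefAux L N d i ≠ 0) ∧ ∑ p, coefAux L N d p * g p = 0)).card :=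
        Finset.card_biUnion_le
    _ ≤ ∑ _d : Fin N → Fin (2 * N), L ^ (N - 1) := by
        refine Finset.sum_le_sum (fun d _ => ?_)
        by_cases h : ∃ i, coefAux L N d i ≠ 0
        · refine le_trans (Finset.card_le_card ?_) (hker (coefAux L N d) h)
          intro g hg
          rw [Finset.mem_filter] at hg ⊢
          exact ⟨hg.1, hg.2.2⟩
        · have : (Finset.univ.filter (fun g : Fin N → ZMod L =>
              (∃ i, coefAux L N d i ≠ 0) ∧ ∑ p, coefAux L N d p * g p = 0)) = ∅ := by
            refine Finset.filter_false_of_mem (fun g _ => ?_)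
            rintro ⟨h1, -⟩
            exact h h1
          simp [this]
    _ = (2 * N) ^ N * L ^ (N - 1) := by
        rw [Finset.sum_const, Finset.card_univ]
        simp [Fintype.card_fun, smul_eq_mul]
end

section
/- Let M, L ≥ 1, n ≥ 1, R ≥ 1 be natural numbers, let Z be an M×M diagonal complex matrix, let w ∈ ℂ^M be the all-ones vector, and for each r ∈ {1,…,R} let A_r and B_r be M×M matrices, each of which is a product of three matrices of the form Σ_{l=0}^{L−1} a_l Z^l (i.e., polynomials of degree at most L−1 in Z). Let C be the M × n^R matrix whose columns, indexed by α ∈ {0,…,n−1}^R, are given by (Π_{r=1}^{R} A_r^{n−α_r} B_r^{α_r})·w. Then rank(C) ≤ 6n(L−1)R + 1, while the number of columns of C is n^R. -/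
open Matrix Polynomial

/-! Every `A_r` and `B_r` is a polynomial of degree at most `3(L-1)` in `Z`, so each product
`Π_r A_r^{n-α_r} B_r^{α_r}` is a polynomial of degree at most `D = 3n(L-1)R` in `Z`. Hence every
column of `C` lies in the Krylov space spanned by `w, Z w, …, Z^D w`, which has dimension at most
`D + 1`. -/

namespace Polynomial

def aevalDegLE (R : Type*) {A : Type*} [CommSemiring R] [Semiring A] [Algebra R A]
    (z : A) (d : ℕ) : Set A :=
  aeval z '' {p : R[X] | p.natDegree ≤ d}

section aevalDegLE

variable {R A : Type*} [CommSemiring R] [Semiring A] [Algebra R A] {z : A}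

theorem aevalDegLE_mono {d e : ℕ} (h : d ≤ e) : aevalDegLE R z d ⊆ aevalDegLE R z e := by
  rintro _ ⟨p, hp, rfl⟩
  exact ⟨p, le_trans hp h, rfl⟩

theorem sum_smul_pow_mem_aevalDegLE {L : ℕ} (a : Fin L → R) :
    ∑ l : Fin L, a l • z ^ (l : ℕ) ∈ aevalDegLE R z (L - 1) := by
  refine ⟨∑ l : Fin L, C (a l) * X ^ (l : ℕ), ?_, by simp [Algebra.smul_def]⟩
  refine natDegree_sum_le_of_forall_le _ _ fun l _ => (natDegree_C_mul_X_pow_le _ _).trans ?_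
  have := l.isLt
  omega

theorem mul_mem_aevalDegLE {x y : A} {d e : ℕ} (hx : x ∈ aevalDegLE R z d)
    (hy : y ∈ aevalDegLE R z e) : x * y ∈ aevalDegLE R z (d + e) := by
  obtain ⟨p, hp, rfl⟩ := hx
  obtain ⟨q, hq, rfl⟩ := hy
  exact ⟨p * q, natDegree_mul_le.trans (add_le_add hp hq), map_mul _ _ _⟩

theorem pow_mem_aevalDegLE {x : A} {d : ℕ} (hx : x ∈ aevalDegLE R z d) (k : ℕ) :
    x ^ k ∈ aevalDegLE R z (k * d) := by
  obtain ⟨p, hp, rfl⟩ := hx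
  exact ⟨p ^ k, natDegree_pow_le.trans (Nat.mul_le_mul_left k hp), map_pow _ _ _⟩

theorem list_prod_mem_aevalDegLE {d : ℕ} (l : List A) (hl : ∀ x ∈ l, x ∈ aevalDegLE R z d) :
    l.prod ∈ aevalDegLE R z (l.length * d) := by
  induction l with
  | nil => exact ⟨1, by simp, map_one _⟩
  | cons x l ih =>
    rw [List.prod_cons, List.length_cons, Nat.succ_mul, add_comm]
    exact mul_mem_aevalDegLE (hl x List.mem_cons_self)
      (ih fun y hy => hl y (List.mem_cons_of_mem x hy))

end aevalDegLE

end Polynomial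

namespace Matrix

variable {ι n K : Type*} [Fintype n] [DecidableEq n]

theorem mulVec_mem_span_pow_mulVec [CommSemiring K] {Z X : Matrix n n K} {d : ℕ}
    (hX : X ∈ aevalDegLE K Z d) (w : n → K) :
    X *ᵥ w ∈ Submodule.span K (Set.range fun k : Fin (d + 1) => Z ^ (k : ℕ) *ᵥ w) := by
  obtain ⟨p, hp, rfl⟩ := hX
  rw [aeval_eq_sum_range' (Nat.lt_succ_of_le hp), sum_mulVec, ← Fin.sum_univ_eq_sum_range]
  exact Submodule.sum_mem _ fun k _ => by
    rw [smul_mulVec]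
    exact Submodule.smul_mem _ _ (Submodule.subset_span ⟨k, rfl⟩)

theorem rank_le_of_col_mem_aevalDegLE [Fintype ι] [Field K] (C : Matrix n ι K) (Z : Matrix n n K)
    (w : n → K) {d : ℕ} (hC : ∀ i, ∃ X ∈ aevalDegLE K Z d, C.col i = X *ᵥ w) :
    C.rank ≤ d + 1 := by
  rw [rank_eq_finrank_span_cols]
  refine le_trans (Submodule.finrank_mono ?_) ((finrank_range_le_card
    (fun k : Fin (d + 1) => Z ^ (k : ℕ) *ᵥ w)).trans_eq (Fintype.card_fin (d + 1)))
  refine Submodule.span_le.2 ?_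
  rintro _ ⟨i, rfl⟩
  obtain ⟨X, hX, hCi⟩ := hC i
  rw [hCi]
  exact mulVec_mem_span_pow_mulVec hX w

end Matrix

theorem precoding_rank_bound_general (M L n R : ℕ)
    (Z : Matrix (Fin M) (Fin M) ℂ)
    (A B : Fin R → Matrix (Fin M) (Fin M) ℂ)
    (hA : ∀ r, ∃ a b c : Fin L → ℂ,
      A r = (∑ l : Fin L, a l • Z ^ (l : ℕ)) * (∑ l : Fin L, b l • Z ^ (l : ℕ)) *
        (∑ l : Fin L, c l • Z ^ (l : ℕ)))
    (hB : ∀ r, ∃ a b c : Fin L → ℂ,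
      B r = (∑ l : Fin L, a l • Z ^ (l : ℕ)) * (∑ l : Fin L, b l • Z ^ (l : ℕ)) *
        (∑ l : Fin L, c l • Z ^ (l : ℕ)))
    (C : Matrix (Fin M) (Fin R → Fin n) ℂ)
    (hC : ∀ (j : Fin M) (α : Fin R → Fin n),
      C j α = ((((List.finRange R).map
          (fun r => A r ^ (n - (α r : ℕ)) * B r ^ ((α r : ℕ)))).prod)
        *ᵥ (fun _ => (1 : ℂ))) j) :
    C.rank ≤ 6 * n * (L - 1) * R + 1 ∧ Fintype.card (Fin R → Fin n) = n ^ R := by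
  have cubic_mem : ∀ Y, (∃ a b c : Fin L → ℂ, Y = (∑ l : Fin L, a l • Z ^ (l : ℕ)) *
      (∑ l : Fin L, b l • Z ^ (l : ℕ)) * (∑ l : Fin L, c l • Z ^ (l : ℕ))) →
      Y ∈ aevalDegLE ℂ Z (3 * (L - 1)) := by
    rintro Y ⟨a, b, c, rfl⟩
    rw [show 3 * (L - 1) = L - 1 + (L - 1) + (L - 1) by ring]
    exact mul_mem_aevalDegLE (mul_mem_aevalDegLE (sum_smul_pow_mem_aevalDegLE a)
      (sum_smul_pow_mem_aevalDegLE b)) (sum_smul_pow_mem_aevalDegLE c)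
  have factor_mem : ∀ (α : Fin R → Fin n) r,
      A r ^ (n - (α r : ℕ)) * B r ^ (α r : ℕ) ∈ aevalDegLE ℂ Z (n * (3 * (L - 1))) := by
    intro α r
    refine aevalDegLE_mono (le_of_eq ?_) (mul_mem_aevalDegLE
      (pow_mem_aevalDegLE (cubic_mem _ (hA r)) _) (pow_mem_aevalDegLE (cubic_mem _ (hB r)) _))
    rw [← add_mul, Nat.sub_add_cancel (α r).isLt.le]
  have rank_le : C.rank ≤ R * (n * (3 * (L - 1))) + 1 := by
    refine C.rank_le_of_col_mem_aevalDegLE Z (fun _ => 1) fun α => ⟨_, ?_, funext fun j => hC j α⟩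
    simpa using list_prod_mem_aevalDegLE ((List.finRange R).map fun r =>
      A r ^ (n - (α r : ℕ)) * B r ^ (α r : ℕ)) (by simpa using factor_mem α)
  refine ⟨rank_le.trans (by nlinarith [Nat.zero_le (n * (L - 1) * R)]), by simp⟩

/-- Rank bound for the Cadambe–Jafar precoding matrix over an `L`-tap multipath
channel.  `Z` is an `M×M` diagonal matrix, `w` the all-ones vector, and for each
`r ∈ {1,…,R}` the matrices `A_r`, `B_r` are products of three polynomials of degree
at most `L−1` in `Z`.  The matrix `C` whose columns, indexed by `α ∈ {0,…,n−1}^R`,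
are `(Π_r A_r^{n−α_r} B_r^{α_r})·w` then has rank at most `6n(L−1)R + 1`, while its
number of columns is `n^R`. -/
theorem precoding_rank_bound (M L n R : ℕ) (hM : 1 ≤ M) (hL : 1 ≤ L) (hn : 1 ≤ n)
    (hR : 1 ≤ R) (dg : Fin M → ℂ)
    (Z : Matrix (Fin M) (Fin M) ℂ) (hZ : Z = Matrix.diagonal dg)
    (A B : Fin R → Matrix (Fin M) (Fin M) ℂ)
    (hA : ∀ r, ∃ a b c : Fin L → ℂ,
      A r = (∑ l : Fin L, a l • Z ^ (l : ℕ)) * (∑ l : Fin L, b l • Z ^ (l : ℕ)) *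
        (∑ l : Fin L, c l • Z ^ (l : ℕ)))
    (hB : ∀ r, ∃ a b c : Fin L → ℂ,
      B r = (∑ l : Fin L, a l • Z ^ (l : ℕ)) * (∑ l : Fin L, b l • Z ^ (l : ℕ)) *
        (∑ l : Fin L, c l • Z ^ (l : ℕ)))
    (C : Matrix (Fin M) (Fin R → Fin n) ℂ)
    (hC : ∀ (j : Fin M) (α : Fin R → Fin n),
      C j α = ((((List.finRange R).map
          (fun r => A r ^ (n - (α r : ℕ)) * B r ^ ((α r : ℕ)))).prod)
        *ᵥ (fun _ => (1 : ℂ))) j) :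
    C.rank ≤ 6 * n * (L - 1) * R + 1 ∧ Fintype.card (Fin R → Fin n) = n ^ R :=
  precoding_rank_bound_general M L n R Z A B hA hB C hC
end

section
/- Let K ≥ 2 and L ≥ 1, and let the delays l_{ij} for i,j ∈ {1,…,K} (including i = j) be independent uniformly distributed random variables on {0,…,L−1}. For each unordered pair {i,j} of distinct indices, let E_{ij} be the event that l_{ij} = l_{jj} or l_{ji} = l_{ii} (i.e., that the normalized cross-delay l'_{ij} = l_{ij} − l_{jj} is zero or l'_{ji} = l_{ji} − l_{ii} is zero). Then the events E_{ij}, over all K(K−1)/2 unordered pairs, are mutually independent and each has probability 1 − (1 − 1/L)². -/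
/-!
Reducing every cross-delay modulo `L` by the diagonal delay of its column,
`l'_{ij} = l_{ij} - l_{jj}`, is a bijection of the sample space that keeps the diagonal. In the
new coordinates the pairs `(l'_{ij}, l'_{ji})`, `i < j`, and the diagonal are independent uniform
coordinates, and `E_{ij}` is the event `l'_{ij} = 0 ∨ l'_{ji} = 0` on the single coordinate of
the pair `{i, j}`; events on distinct coordinates of a uniform product are independent.
-/

open Finset

section UniformProbability

variable {α β γ ι : Type*} [Fintype α] [Fintype β] [Fintype γ] [Fintype ι]

theorem card_filter_fst_equiv_prod_div_card [Nonempty γ] (e : α ≃ β × γ) (P : β → Prop)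
    [DecidablePred P] :
    (#{a | P (e a).1} : ℚ) / Fintype.card α = #{b | P b} / Fintype.card β := by
  rw [card_equiv e (t := {x | P x.1}) (by simp), Fintype.card_congr e, ← univ_product_univ,
    filter_product_left, card_product, Fintype.card_prod, card_univ]
  push_cast
  exact mul_div_mul_right _ _ (by positivity)

theorem card_filter_forall_mem_div_card_pi [DecidableEq ι] [DecidableEq β] [Nonempty β]
    (S : Finset ι) (A : ι → Finset β) :
    (#{g : ι → β | ∀ i ∈ S, g i ∈ A i} : ℚ) / Fintype.card (ι → β)
      = ∏ i ∈ S, (#(A i) : ℚ) / Fintype.card β := by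
  have hpi : ({g : ι → β | ∀ i ∈ S, g i ∈ A i} : Finset (ι → β))
      = Fintype.piFinset (fun i => if i ∈ S then A i else univ) := by
    ext g
    simp only [mem_filter, mem_univ, true_and, Fintype.mem_piFinset]
    refine forall_congr' fun i => ?_
    split_ifs with hi <;> simp [hi]
  rw [hpi, Fintype.card_piFinset, Fintype.card_pi, ← Fintype.prod_ite_mem S]
  push_cast
  rw [← prod_div_distrib]
  refine prod_congr rfl fun i _ => ?_
  split_ifs <;> simp [Fintype.card_ne_zero]

end UniformProbability

theorem card_filter_fst_eq_or_snd_eq_div_card {β : Type*} [Fintype β] [DecidableEq β] (b : β) :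
    (#{x : β × β | x.1 = b ∨ x.2 = b} : ℚ) / Fintype.card (β × β)
      = 1 - (1 - 1 / Fintype.card β) ^ 2 := by
  have hmiss : #{x : β × β | ¬(x.1 = b ∨ x.2 = b)} = (Fintype.card β - 1) ^ 2 := by
    have hprod : ({x : β × β | ¬(x.1 = b ∨ x.2 = b)} : Finset (β × β))
        = univ.erase b ×ˢ univ.erase b := by
      ext x; simp [not_or]
    rw [hprod, card_product, card_erase_of_mem (mem_univ b), card_univ, sq]
  have hsplit := card_filter_add_card_filter_not (s := (univ : Finset (β × β)))
    (fun x => x.1 = b ∨ x.2 = b)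
  rw [hmiss, card_univ, Fintype.card_prod] at hsplit
  have hpos : 1 ≤ Fintype.card β := Fintype.card_pos_iff.2 ⟨b⟩
  have hcast : (#{x : β × β | x.1 = b ∨ x.2 = b} : ℚ)
      = (Fintype.card β : ℚ) ^ 2 - ((Fintype.card β : ℚ) - 1) ^ 2 := by
    rw [eq_sub_iff_add_eq, ← Nat.cast_one, ← Nat.cast_sub hpos]
    exact_mod_cast hsplit.trans (sq _).symm
  have hne : (Fintype.card β : ℚ) ≠ 0 := by positivity
  rw [hcast, Fintype.card_prod]
  push_cast
  field_simp

def normalizedDelayEquiv (K L : ℕ) [NeZero L] :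
    (Fin K × Fin K → Fin L) ≃
      (({p : Fin K × Fin K // p.1 < p.2} → Fin L × Fin L) × (Fin K → Fin L)) where
  toFun f := (fun p => (f p.1 - f (p.1.2, p.1.2), f p.1.swap - f (p.1.1, p.1.1)),
              fun i => f (i, i))
  invFun x q :=
    if h : q.1 = q.2 then x.2 q.1
    else if hlt : q.1 < q.2 then (x.1 ⟨q, hlt⟩).1 + x.2 q.2
    else (x.1 ⟨q.swap, lt_of_le_of_ne (not_lt.1 hlt) (Ne.symm h)⟩).2 + x.2 q.2
  left_inv f := by
    funext ⟨i, j⟩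
    by_cases h : i = j
    · subst h; simp
    · by_cases hlt : i < j <;> simp [h, hlt]
  right_inv := by
    rintro ⟨h, d⟩
    refine Prod.ext (funext fun ⟨⟨i, j⟩, hlt⟩ => ?_) (funext fun i => by simp)
    simp [hlt.ne, hlt.ne', hlt, not_lt.2 hlt.le]

theorem normalizedDelayEquiv_fst_apply {K L : ℕ} [NeZero L] (f : Fin K × Fin K → Fin L)
    (p : {p : Fin K × Fin K // p.1 < p.2}) :
    (normalizedDelayEquiv K L f).1 p = (f p.1 - f (p.1.2, p.1.2), f p.1.swap - f (p.1.1, p.1.1)) :=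
  rfl

theorem cross_delay_events_independent_general (K L : ℕ) (hL : 1 ≤ L)
    (S : Finset {p : Fin K × Fin K // p.1 < p.2}) :
    ((Finset.univ.filter (fun f : Fin K × Fin K → Fin L =>
          ∀ p ∈ S, f (p.1.1, p.1.2) = f (p.1.2, p.1.2) ∨
            f (p.1.2, p.1.1) = f (p.1.1, p.1.1))).card : ℚ)
        / (Fintype.card (Fin K × Fin K → Fin L) : ℚ)
      = (1 - (1 - 1 / (L : ℚ)) ^ 2) ^ S.card := by
  have : NeZero L := NeZero.of_pos hL
  let axes : Finset (Fin L × Fin L) := {x | x.1 = 0 ∨ x.2 = 0}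
  have hevent : ∀ f : Fin K × Fin K → Fin L,
      (∀ p ∈ S, f (p.1.1, p.1.2) = f (p.1.2, p.1.2) ∨ f (p.1.2, p.1.1) = f (p.1.1, p.1.1)) ↔
        ∀ p ∈ S, (normalizedDelayEquiv K L f).1 p ∈ axes := by
    intro f
    simp [axes, normalizedDelayEquiv_fst_apply, sub_eq_zero]
  rw [filter_congr fun f _ => hevent f,
    card_filter_fst_equiv_prod_div_card (normalizedDelayEquiv K L)
      (fun h => ∀ p ∈ S, h p ∈ axes),
    card_filter_forall_mem_div_card_pi, prod_const, card_filter_fst_eq_or_snd_eq_div_card,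
    Fintype.card_fin]

/-- Let the delays `l_{ij}`, `i,j ∈ {1,…,K}`, be i.i.d. uniform on `{0,…,L−1}`
(sample space: all functions `Fin K × Fin K → Fin L`, uniform).  For each unordered
pair of distinct indices, represented as `(i,j)` with `i < j`, let `E_{ij}` be the
event that `l_{ij} = l_{jj}` or `l_{ji} = l_{ii}`.  Then these events are mutually
independent and each has probability `1 − (1 − 1/L)²`: for every finite collection
`S` of pairs, the probability of the intersection of the events in `S` equals
`(1 − (1 − 1/L)²)^{|S|}`. -/
theorem cross_delay_events_independent (K L : ℕ) (hK : 2 ≤ K) (hL : 1 ≤ L)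
    (S : Finset {p : Fin K × Fin K // p.1 < p.2}) :
    ((Finset.univ.filter (fun f : Fin K × Fin K → Fin L =>
          ∀ p ∈ S, f (p.1.1, p.1.2) = f (p.1.2, p.1.2) ∨
            f (p.1.2, p.1.1) = f (p.1.1, p.1.1))).card : ℚ)
        / (Fintype.card (Fin K × Fin K → Fin L) : ℚ)
      = (1 - (1 - 1 / (L : ℚ)) ^ 2) ^ S.card :=
  cross_delay_events_independent_general K L hL S
end
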